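/- arXiv:2010.15102 — 2 statements merged into one kernel-verified Lean document; each statement's English description precedes it below -/
import Mathlib

section
/- Suppose Assumption (Ass) holds and let H_V be the pseudo-Friedrichs extension. If K(λ)g = −g for some λ ∈ ℂ \ σ(H₀) and nonzero g ∈ H', then ψ := G₀^{1/2}(H₀ − λ)^{-1}[B G₀^{-1/2}]* g is nonzero, ψ ∈ Dom(H_V) and H_V ψ = λψ. In particular, λ ∈ σ_p(H_V). -/
/-!
With `u = (H₀ - μ)⁻¹ b^* g` (in the `G₀`-conjugated picture), `a u = K(μ) g = -g`, so
`(W - μ S²) u = (T - μ S²) u + b^* (a u) = b^* g - b^* g = 0`; and `u ≠ 0` because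
`a u = -g ≠ 0`, hence `S u ≠ 0` by injectivity of `S`.
-/

open ContinuousLinearMap

noncomputable section

/-- An abstract encoding of the setting of Assumption 1.1 of
Hansmann–Krejčiřík.  The self-adjoint operator `H₀` in the Hilbert space `H`
is encoded through the *bounded* operators
`S = G₀^{-1/2} = (|H₀|+1)^{-1/2}` and `T = H₀ G₀^{-1}`,
and the relatively bounded factors `A, B` of the perturbation `V = B^*A`
through the bounded operators `a = A G₀^{-1/2}` and `b = B G₀^{-1/2}`. -/
structure BSSetup (H H' : Type*) [NormedAddCommGroup H] [InnerProductSpace ℂ H]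
    [CompleteSpace H] [NormedAddCommGroup H'] [InnerProductSpace ℂ H'] [CompleteSpace H'] where
  /-- `S` represents `G₀^{-1/2} = (|H₀|+1)^{-1/2}`. -/
  S : H →L[ℂ] H
  /-- `T` represents `H₀ G₀^{-1}`. -/
  T : H →L[ℂ] H
  /-- `a` represents the bounded operator `A G₀^{-1/2}`. -/
  a : H →L[ℂ] H'
  /-- `b` represents the bounded operator `B G₀^{-1/2}`. -/
  b : H →L[ℂ] H'
  S_sa : IsSelfAdjoint S
  T_sa : IsSelfAdjoint T
  S_pos : ∀ x : H, 0 ≤ (inner ℂ x (S x) : ℂ).re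
  S_inj : Function.Injective S
  S_dense : DenseRange S
  S_norm : ‖S‖ ≤ 1
  comm : S * T = T * S
  /-- `|H₀| G₀^{-1} = 1 - S²`, i.e. `T² = (H₀ G₀^{-1})² = (1-S²)²`. -/
  T_sq : T * T = (1 - S * S) * (1 - S * S)

namespace BSSetup

variable {H H' : Type*} [NormedAddCommGroup H] [InnerProductSpace ℂ H]
  [CompleteSpace H] [NormedAddCommGroup H'] [InnerProductSpace ℂ H'] [CompleteSpace H']
  (P : BSSetup H H')

/-- The bounded operator `(H₀ - z) G₀^{-1}`. -/
def Tz (z : ℂ) : H →L[ℂ] H := P.T - z • (P.S * P.S)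

/-- The resolvent set `ρ(H₀)`:  `z ∈ ρ(H₀)` iff `(H₀ - z)G₀^{-1}` is boundedly
invertible. -/
def res : Set ℂ := {z | IsUnit (P.Tz z)}

/-- The spectrum `σ(H₀)`. -/
def spec : Set ℂ := {z | ¬ IsUnit (P.Tz z)}

/-- The point spectrum `σ_p(H₀)`: eigenvectors of `H₀` are of the form `ψ = G₀^{-1} x`. -/
def pointSpec : Set ℂ := {z | ∃ x : H, x ≠ 0 ∧ P.Tz z x = 0}

/-- The continuous spectrum `σ_c(H₀)`: `z ∈ σ(H₀)`, `z` is not an eigenvalue and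
the range of `H₀ - z` (which equals the range of `(H₀-z)G₀^{-1}`) is dense. -/
def contSpec : Set ℂ :=
  {z | ¬ IsUnit (P.Tz z) ∧ (∀ x : H, P.Tz z x = 0 → x = 0) ∧ DenseRange (P.Tz z)}

/-- The Birman–Schwinger operator
`K(z) = [A G₀^{-1/2}][G₀(H₀ - z)^{-1}][B G₀^{-1/2}]^*`. -/
def K (z : ℂ) : H' →L[ℂ] H' :=
  P.a ∘L (Ring.inverse (P.Tz z)) ∘L (ContinuousLinearMap.adjoint P.b)

/-- `W = H₀ G₀^{-1} + [B G₀^{-1/2}]^* A G₀^{-1/2}`; the pseudo-Friedrichs extension is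
`H_V = G₀^{1/2} W G₀^{1/2}`, i.e. `ψ = S u ∈ Dom(H_V)` iff `W u ∈ Ran S`, and then
`H_V (S u) = y` where `W u = S y`. -/
def W : H →L[ℂ] H := P.T + (ContinuousLinearMap.adjoint P.b) ∘L P.a

/-- The bounded operator `(H₀ - z)G₀^{-1} + [B G₀^{-1/2}]^* A G₀^{-1/2}`,
representing `(H_V - z)` conjugated with `G₀^{1/2}`. -/
def Wz (z : ℂ) : H →L[ℂ] H := P.W - z • (P.S * P.S)

/-- Assumption 1.1 (Ass): there is `λ₀ ∈ ρ(H₀)` with `-1 ∉ σ(K(λ₀))`. -/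
def Ass : Prop := ∃ μ : ℂ, IsUnit (P.Tz μ) ∧ (-1 : ℂ) ∉ spectrum ℂ (P.K μ)

end BSSetup

theorem ContinuousLinearMap.apply_ringInverse_apply {R M : Type*} [Semiring R]
    [TopologicalSpace M] [AddCommMonoid M] [Module R M] {T : M →L[R] M} (hT : IsUnit T)
    (x : M) : T (Ring.inverse T x) = x :=
  congr($(Ring.mul_inverse_cancel T hT) x)

namespace BSSetup

variable {H H' : Type*} [NormedAddCommGroup H] [InnerProductSpace ℂ H]
  [CompleteSpace H] [NormedAddCommGroup H'] [InnerProductSpace ℂ H'] [CompleteSpace H']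
  (P : BSSetup H H')

theorem Wz_apply (z : ℂ) (u : H) : P.Wz z u = P.Tz z u + adjoint P.b (P.a u) := by
  simp only [Wz, W, Tz, sub_apply, add_apply, comp_apply]
  abel

theorem K_apply (z : ℂ) (g : H') :
    P.K z g = P.a (Ring.inverse (P.Tz z) (adjoint P.b g)) :=
  rfl

theorem resolvent_ne_zero_of_K_eq_neg {z : ℂ} {g : H'} (hg : g ≠ 0) (hK : P.K z g = -g) :
    Ring.inverse (P.Tz z) (adjoint P.b g) ≠ 0 := by
  intro hu
  rw [K_apply, hu, map_zero, zero_eq_neg] at hK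
  exact hg hK

theorem Wz_resolvent_eq_zero_of_K_eq_neg {z : ℂ} (hz : IsUnit (P.Tz z)) {g : H'}
    (hK : P.K z g = -g) : P.Wz z (Ring.inverse (P.Tz z) (adjoint P.b g)) = 0 := by
  rw [K_apply] at hK
  rw [Wz_apply, apply_ringInverse_apply hz, hK, map_neg, add_neg_cancel]

end BSSetup

theorem BSSetup.birman_schwinger_backward_general
    {H H' : Type*} [NormedAddCommGroup H] [InnerProductSpace ℂ H]
    [CompleteSpace H] [NormedAddCommGroup H'] [InnerProductSpace ℂ H'] [CompleteSpace H']
    (P : BSSetup H H') (μ : ℂ) (hμ : IsUnit (P.Tz μ))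
    (g : H') (hg : g ≠ 0) (hK : P.K μ g = -g) :
    P.S (Ring.inverse (P.Tz μ) (ContinuousLinearMap.adjoint P.b g)) ≠ 0 ∧
    P.Wz μ (Ring.inverse (P.Tz μ) (ContinuousLinearMap.adjoint P.b g)) = 0 :=
  ⟨fun hS => P.resolvent_ne_zero_of_K_eq_neg hg hK (P.S_inj (hS.trans (map_zero P.S).symm)),
    P.Wz_resolvent_eq_zero_of_K_eq_neg hμ hK⟩

/-- Theorem 3.2.  Under Assumption (Ass), if `K(μ) g = -g` for some
`μ ∈ ℂ \ σ(H₀)` and nonzero `g ∈ H'`, then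
`ψ := G₀^{1/2}(H₀ - μ)^{-1}[B G₀^{-1/2}]^* g = S u` with
`u := ((H₀-μ)G₀^{-1})⁻¹ b^* g` is a nonzero element of `Dom(H_V)` with `H_V ψ = μ ψ`
(encoded by `(W - μ S²) u = 0`); in particular `μ ∈ σ_p(H_V)`. -/
theorem BSSetup.birman_schwinger_backward
    {H H' : Type*} [NormedAddCommGroup H] [InnerProductSpace ℂ H]
    [CompleteSpace H] [NormedAddCommGroup H'] [InnerProductSpace ℂ H'] [CompleteSpace H']
    (P : BSSetup H H') (hAss : P.Ass) (μ : ℂ) (hμ : IsUnit (P.Tz μ))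
    (g : H') (hg : g ≠ 0) (hK : P.K μ g = -g) :
    P.S (Ring.inverse (P.Tz μ) (ContinuousLinearMap.adjoint P.b g)) ≠ 0 ∧
    P.Wz μ (Ring.inverse (P.Tz μ) (ContinuousLinearMap.adjoint P.b g)) = 0 :=
  BSSetup.birman_schwinger_backward_general P μ hμ g hg hK
end
end

section
/- Suppose Assumption (Ass) holds. Let λ ∈ ℂ \ σ(H₀) and suppose {ψ_n} ⊂ Dom(H_V) with ‖ψ_n‖ = 1 for all n and (H_V − λ)ψ_n → 0. Then liminf_n ‖Aψ_n‖ > 0, and with φ_n := Aψ_n, (φ_n, K(λ)φ_n)/‖φ_n‖² → −1 as n → ∞. Consequently, ‖K(λ)‖ ≥ 1. -/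
open ContinuousLinearMap

noncomputable section

/-!
Write `ψₙ = S uₙ` and `rₙ = yₙ - μ ψₙ`, so that `Wz μ uₙ = S rₙ`. Splitting `Wz μ = Tz μ + b* a`
and inverting `Tz μ` gives `uₙ = (Tz μ)⁻¹ S rₙ - (Tz μ)⁻¹ b* φₙ`. Applying `a` yields
`φₙ + K(μ) φₙ = a (Tz μ)⁻¹ S rₙ → 0`; applying `S` and using `‖ψₙ‖ = 1` shows that `‖φₙ‖` stays
away from zero. Hence the Rayleigh quotients of `K(μ)` along `φₙ` tend to `-1`, and each of them
is bounded by `‖K(μ)‖`.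

The liminf is a genuine one because `φₙ` is bounded: under (Ass), Jacobson's lemma turns the
invertibility of `1 + K(λ₀)` into that of `1 + (Tz λ₀)⁻¹ b* a`, so `Wz λ₀` is invertible, and
`Wz λ₀ uₙ = S rₙ + (μ - λ₀) S ψₙ` is bounded.
-/

open Filter Topology Asymptotics

theorem spectrum.isUnit_one_add_of_neg_one_notMem {R A : Type*} [CommRing R] [Ring A]
    [Algebra R A] {a : A} (h : (-1 : R) ∉ spectrum R a) : IsUnit (1 + a) := by
  rw [spectrum.notMem_iff, map_neg, map_one, ← neg_add'] at h
  exact (IsUnit.neg_iff _).mp h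

namespace ContinuousLinearMap

section Jacobson

variable {R M N : Type*} [Ring R] [TopologicalSpace M] [AddCommGroup M] [IsTopologicalAddGroup M]
  [Module R M] [TopologicalSpace N] [AddCommGroup N] [IsTopologicalAddGroup N] [Module R N]

/-- Jacobson's lemma for rectangular operators: `(1 + Y X)⁻¹ = 1 - Y (1 + X Y)⁻¹ X`. -/
theorem isUnit_one_add_comp_swap {X : M →L[R] N} {Y : N →L[R] M} (h : IsUnit (1 + X ∘L Y)) :
    IsUnit (1 + Y ∘L X) := by
  obtain ⟨C, hC, hC'⟩ := isUnit_iff_exists.mp h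
  have hC x : Y (C x) + Y (X (Y (C x))) = Y x := by simpa [add_comm] using congr(Y ($hC x))
  have hC' x : Y (C x) + Y (C (X (Y x))) = Y x := by simpa using congr(Y ($hC' x))
  refine isUnit_iff_exists.mpr ⟨1 - Y ∘L C ∘L X, ?_, ?_⟩ <;> ext x
  · simp only [mul_apply_eq_comp, sub_apply, one_apply_eq_self, comp_apply, add_apply, map_sub]
    linear_combination (norm := abel) -hC (X x)
  · simp only [mul_apply_eq_comp, add_apply, one_apply_eq_self, comp_apply, sub_apply, map_add]
    linear_combination (norm := abel) -hC' (X x)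

end Jacobson

theorem eventually_div_le_norm_of_le_norm_apply {𝕜 E F ι : Type*} [NontriviallyNormedField 𝕜]
    [NormedAddCommGroup E] [NormedSpace 𝕜 E] [NormedAddCommGroup F] [NormedSpace 𝕜 F]
    (L : E →L[𝕜] F) {l : Filter ι} {x : ι → E} {ε : ℝ} (h : ∀ᶠ n in l, ε ≤ ‖L (x n)‖) : ∀ᶠ n in l, ε / (‖L‖ + 1) ≤ ‖x n‖ := by
  filter_upwards [h] with n hn
  rw [div_le_iff₀ (by positivity)]
  calc ε ≤ ‖L (x n)‖ := hn
    _ ≤ ‖L‖ * ‖x n‖ := L.le_opNorm _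
    _ ≤ ‖x n‖ * (‖L‖ + 1) := by nlinarith [norm_nonneg (x n)]

variable {𝕜 E ι : Type*} [RCLike 𝕜] [NormedAddCommGroup E] [InnerProductSpace 𝕜 E]

theorem norm_inner_apply_div_norm_sq_le (T : E →L[𝕜] E) (x : E) :
    ‖(inner 𝕜 x (T x) : 𝕜) / (‖x‖ : 𝕜) ^ 2‖ ≤ ‖T‖ := by
  rcases eq_or_ne x 0 with rfl | hx
  · simp
  have hx : 0 < ‖x‖ := norm_pos_iff.mpr hx
  rw [norm_div, norm_pow, RCLike.norm_ofReal, abs_norm, div_le_iff₀ (by positivity)]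
  calc ‖(inner 𝕜 x (T x) : 𝕜)‖ ≤ ‖x‖ * ‖T x‖ := norm_inner_le_norm _ _
    _ ≤ ‖x‖ * (‖T‖ * ‖x‖) := by gcongr; exact T.le_opNorm x
    _ = ‖T‖ * ‖x‖ ^ 2 := by ring

theorem norm_le_opNorm_of_tendsto_inner_apply_div_norm_sq (T : E →L[𝕜] E) {l : Filter ι}
    [l.NeBot] {x : ι → E} {c : 𝕜}
    (h : Tendsto (fun n => (inner 𝕜 (x n) (T (x n)) : 𝕜) / (‖x n‖ : 𝕜) ^ 2) l (𝓝 c)) :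
    ‖c‖ ≤ ‖T‖ :=
  le_of_tendsto' h.norm fun n => T.norm_inner_apply_div_norm_sq_le (x n)

theorem tendsto_inner_apply_div_norm_sq (T : E →L[𝕜] E) {l : Filter ι} {x : ι → E} {c : 𝕜}
    {δ : ℝ} (hδ : 0 < δ) (hx : ∀ᶠ n in l, δ ≤ ‖x n‖)
    (hT : Tendsto (fun n => T (x n) - c • x n) l (𝓝 0)) :
    Tendsto (fun n => (inner 𝕜 (x n) (T (x n)) : 𝕜) / (‖x n‖ : 𝕜) ^ 2) l (𝓝 c) := by
  rw [← tendsto_sub_nhds_zero_iff]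
  have hbound : Tendsto (fun n => ‖T (x n) - c • x n‖ / δ) l (𝓝 0) := by
    simpa using hT.norm.div_const δ
  refine squeeze_zero_norm' ?_ hbound
  filter_upwards [hx] with n hn
  have hpos : 0 < ‖x n‖ := hδ.trans_le hn
  have hsq : (‖x n‖ : 𝕜) ^ 2 ≠ 0 := by exact_mod_cast (pow_pos hpos 2).ne'
  have hdiff : (inner 𝕜 (x n) (T (x n)) : 𝕜) / (‖x n‖ : 𝕜) ^ 2 - c
      = inner 𝕜 (x n) (T (x n) - c • x n) / (‖x n‖ : 𝕜) ^ 2 := by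
    rw [inner_sub_right, inner_smul_right, inner_self_eq_norm_sq_to_K, sub_div,
      mul_div_cancel_right₀ _ hsq]
  rw [hdiff, norm_div, norm_pow, RCLike.norm_ofReal, abs_norm]
  calc ‖(inner 𝕜 (x n) (T (x n) - c • x n) : 𝕜)‖ / ‖x n‖ ^ 2
      ≤ ‖x n‖ * ‖T (x n) - c • x n‖ / ‖x n‖ ^ 2 := by gcongr; exact norm_inner_le_norm _ _
    _ = ‖T (x n) - c • x n‖ / ‖x n‖ := by field_simp
    _ ≤ ‖T (x n) - c • x n‖ / δ := by gcongr

end ContinuousLinearMap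

namespace BSSetup

variable {H H' : Type*} [NormedAddCommGroup H] [InnerProductSpace ℂ H]
  [CompleteSpace H] [NormedAddCommGroup H'] [InnerProductSpace ℂ H'] [CompleteSpace H']
  (P : BSSetup H H')

theorem Wz_eq_Tz_add (z : ℂ) : P.Wz z = P.Tz z + adjoint P.b ∘L P.a := by
  simp only [Wz, Tz, W]
  abel

theorem Wz_apply_eq_add (z w : ℂ) (x : H) :
    P.Wz z x = P.Wz w x + (w - z) • P.S (P.S x) := by
  simp only [Wz, sub_apply, smul_apply, mul_apply_eq_comp, sub_smul]
  abel

theorem Wz_apply_of_W_apply {x y : H} (h : P.W x = P.S y) (z : ℂ) :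
    P.Wz z x = P.S (y - z • P.S x) := by
  simp [Wz, h]

theorem isUnit_Wz {z : ℂ} (hT : IsUnit (P.Tz z)) (hK : (-1 : ℂ) ∉ spectrum ℂ (P.K z)) :
    IsUnit (P.Wz z) := by
  set J := Ring.inverse (P.Tz z)
  have hfactor : P.Wz z = P.Tz z * (1 + (J ∘L adjoint P.b) ∘L P.a) := by
    rw [Wz_eq_Tz_add, mul_add, mul_one, mul_def, ← comp_assoc, ← comp_assoc, ← mul_def,
      Ring.mul_inverse_cancel _ hT, one_def, id_comp]
  rw [hfactor]
  exact hT.mul (isUnit_one_add_comp_swap (spectrum.isUnit_one_add_of_neg_one_notMem hK))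

theorem Ass.exists_isUnit_Wz (h : P.Ass) : ∃ z, IsUnit (P.Wz z) :=
  let ⟨_, hT, hK⟩ := h
  ⟨_, P.isUnit_Wz hT hK⟩

section Resolvent

variable {P} {μ : ℂ} (hμ : IsUnit (P.Tz μ)) {x r : H} (hW : P.Wz μ x = P.S r)
include hμ hW

theorem eq_inverse_Tz_apply :
    x = Ring.inverse (P.Tz μ) (P.S r) - Ring.inverse (P.Tz μ) (adjoint P.b (P.a x)) := by
  rw [← map_sub, ← hW, Wz_eq_Tz_add, add_apply, comp_apply, add_sub_cancel_right,
    ← mul_apply_eq_comp, Ring.inverse_mul_cancel _ hμ, one_apply_eq_self]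

theorem a_add_K_apply :
    P.a x + P.K μ (P.a x) = P.a (Ring.inverse (P.Tz μ) (P.S r)) := by
  have := congrArg P.a (eq_inverse_Tz_apply hμ hW)
  rw [map_sub] at this
  exact eq_sub_iff_add_eq.mp this

theorem S_apply_eq :
    P.S x = P.S (Ring.inverse (P.Tz μ) (P.S r))
      - (P.S ∘L Ring.inverse (P.Tz μ) ∘L adjoint P.b) (P.a x) := by
  simpa using congrArg P.S (eq_inverse_Tz_apply hμ hW)

end Resolvent

variable {P} {μ : ℂ} {u r : ℕ → H} (hW : ∀ n, P.Wz μ (u n) = P.S (r n))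
  (hr : Tendsto r atTop (𝓝 0)) (hnorm : ∀ n, ‖P.S (u n)‖ = 1)
include hW hr hnorm

theorem exists_pos_eventually_le_norm_a (hμ : IsUnit (P.Tz μ)) :
    ∃ δ > 0, ∀ᶠ n in atTop, δ ≤ ‖P.a (u n)‖ := by
  set L := P.S ∘L Ring.inverse (P.Tz μ) ∘L adjoint P.b
  have hsmall : Tendsto (fun n => ‖P.S (Ring.inverse (P.Tz μ) (P.S (r n)))‖) atTop (𝓝 0) := by
    simpa using ((P.S ∘L Ring.inverse (P.Tz μ) ∘L P.S).continuous.tendsto 0 |>.comp hr).norm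
  have hL : ∀ᶠ n in atTop, 1 / 2 ≤ ‖L (P.a (u n))‖ := by
    filter_upwards [hsmall.eventually_le_const (by norm_num : (0 : ℝ) < 1 / 2)] with n hn
    have := norm_sub_le (P.S (Ring.inverse (P.Tz μ) (P.S (r n)))) (L (P.a (u n)))
    rw [← S_apply_eq hμ (hW n), hnorm n] at this
    linarith
  exact ⟨_, by positivity, L.eventually_div_le_norm_of_le_norm_apply hL⟩

theorem Ass.isBigO_one (hAss : P.Ass) : u =O[atTop] (fun _ => (1 : ℝ)) := by
  obtain ⟨z, hz⟩ := hAss.exists_isUnit_Wz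
  have hSu : (fun n => P.S (u n)) =O[atTop] (fun _ => (1 : ℝ)) :=
    (isBigO_one_iff ℝ).mpr ⟨1, by simp [hnorm]⟩
  have hWu : (fun n => P.Wz z (u n)) =O[atTop] (fun _ => (1 : ℝ)) := by
    simp only [P.Wz_apply_eq_add z μ, hW]
    exact ((P.S.isBigO_comp r atTop).trans (hr.isBigO_one ℝ)).add
      (((P.S.isBigO_comp _ atTop).trans hSu).const_smul_left _)
  have hu : u = fun n => Ring.inverse (P.Wz z) (P.Wz z (u n)) := by
    ext1 n
    rw [← mul_apply_eq_comp, Ring.inverse_mul_cancel _ hz, one_apply_eq_self]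
  rw [hu]
  exact (isBigO_comp _ _ atTop).trans hWu

end BSSetup

/-- Theorem 5.1 and Corollary 5.2.  Under Assumption (Ass), let
`μ ∈ ℂ \ σ(H₀)` and let `ψ n = S (u n) ∈ Dom(H_V)` with `‖ψ n‖ = 1`,
`H_V (ψ n) = y n` (i.e. `W (u n) = S (y n)`) and `(H_V - μ) ψ n = y n - μ • ψ n → 0`.
Then `liminf ‖A ψ n‖ = liminf ‖a (u n)‖ > 0`, and with `φ n := a (u n)`,
`⟪φ n, K(μ) (φ n)⟫ / ‖φ n‖² → -1`.  Consequently `‖K(μ)‖ ≥ 1`. -/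
theorem BSSetup.essential_spectrum_BS
    {H H' : Type*} [NormedAddCommGroup H] [InnerProductSpace ℂ H]
    [CompleteSpace H] [NormedAddCommGroup H'] [InnerProductSpace ℂ H'] [CompleteSpace H']
    (P : BSSetup H H') (hAss : P.Ass) (μ : ℂ) (hμ : IsUnit (P.Tz μ))
    (u y : ℕ → H) (hdom : ∀ n, P.W (u n) = P.S (y n))
    (hnorm : ∀ n, ‖P.S (u n)‖ = 1)
    (hconv : Filter.Tendsto (fun n => y n - μ • P.S (u n)) Filter.atTop (nhds 0)) :
    0 < Filter.liminf (fun n => ‖P.a (u n)‖) Filter.atTop ∧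
    Filter.Tendsto
      (fun n => (inner ℂ (P.a (u n)) (P.K μ (P.a (u n))) : ℂ) / ((‖P.a (u n)‖ : ℂ))^2)
      Filter.atTop (nhds (-1)) ∧
    1 ≤ ‖P.K μ‖ := by
  have hW n : P.Wz μ (u n) = P.S (y n - μ • P.S (u n)) := P.Wz_apply_of_W_apply (hdom n) μ
  obtain ⟨δ, hδ, hlow⟩ := exists_pos_eventually_le_norm_a hW hconv hnorm hμ
  have hbdd : IsBoundedUnder (· ≤ ·) atTop fun n => ‖P.a (u n)‖ :=
    (isBigO_one_iff ℝ).mp ((P.a.isBigO_comp u atTop).trans (hAss.isBigO_one hW hconv hnorm))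
  have hweyl : Tendsto (fun n => P.K μ (P.a (u n)) - (-1 : ℂ) • P.a (u n)) atTop (𝓝 0) := by
    simp only [neg_smul, one_smul, sub_neg_eq_add, add_comm (P.K μ _), a_add_K_apply hμ (hW _)]
    have := (P.a ∘L Ring.inverse (P.Tz μ) ∘L P.S).continuous.tendsto 0 |>.comp hconv
    rwa [map_zero] at this
  have hquot := (P.K μ).tendsto_inner_apply_div_norm_sq hδ hlow hweyl
  refine ⟨hδ.trans_le (le_liminf_of_le hbdd.isCoboundedUnder_ge hlow), hquot, ?_⟩
  simpa using (P.K μ).norm_le_opNorm_of_tendsto_inner_apply_div_norm_sq hquot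
end
end
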